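/- Let K be an algebraically closed field equipped with a real-valued valuation v such that 1 lies in the image v(Kˣ), and let I ⊆ K[x_0,…,x_n] be a homogeneous ideal with zero locus Z(I) ⊆ K^{n+1}. Then Trop(Z(I)) ⊆ ℝ^{n+1} is a tropical cone: for every ω ∈ Trop(Z(I)) and every λ ∈ ℝ, the point (ω_0 + λ, …, ω_n + λ) belongs to Trop(Z(I)). -/

import Mathlib

open MvPolynomial

/-- `v : K → ℝ` is a real-valued valuation on the field `K`.  This encodes the usual
notion of a map `v : K → ℝ ∪ {∞}` with `v x = ∞ ↔ x = 0`, `v (x*y) = v x + v y` and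
`v (x+y) ≥ min (v x) (v y)`: the value of `v` at `0` is irrelevant (it "is" `∞`), and
all the axioms involving `0` are automatic. -/
def IsRealValuation {K : Type*} [Field K] (v : K → ℝ) : Prop :=
  (∀ x y : K, x ≠ 0 → y ≠ 0 → v (x * y) = v x + v y) ∧
  (∀ x y : K, x ≠ 0 → y ≠ 0 → x + y ≠ 0 → min (v x) (v y) ≤ v (x + y))

/-- `Trop(Z(I))`: the closure in `ℝⁿ` of the set of coordinatewise tropicalizations
`ω i = -(v (x i))` of the points `x` of the zero locus of `I` all of whose coordinates
are nonzero. -/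
def tropOfZeroLocus {K : Type*} [Field K] {n : ℕ} (v : K → ℝ)
    (I : Ideal (MvPolynomial (Fin n) K)) : Set (Fin n → ℝ) :=
  closure { ω : Fin n → ℝ | ∃ x : Fin n → K,
    (∀ f ∈ I, MvPolynomial.eval x f = 0) ∧ (∀ i, x i ≠ 0) ∧ (∀ i, ω i = -(v (x i))) }

/-- The value `-(v f_a) + ⟨ω, a⟩` of the term of the tropicalization `τ(f)`
corresponding to the exponent `a`, at the point `ω`. -/
def tropTerm {K : Type*} [Field K] {n : ℕ} (v : K → ℝ) (f : MvPolynomial (Fin n) K)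
    (ω : Fin n → ℝ) (a : Fin n →₀ ℕ) : ℝ :=
  -(v (f.coeff a)) + ∑ i, ω i * (a i : ℝ)

/-- `T(τ(f))`: the tropical zero locus of the tropicalization of `f`, i.e. the set of `ω`
where the maximum of the terms of `τ(f)` is attained at least twice. -/
def tropHypersurface {K : Type*} [Field K] {n : ℕ} (v : K → ℝ)
    (f : MvPolynomial (Fin n) K) : Set (Fin n → ℝ) :=
  { ω | ∃ a ∈ f.support, ∃ b ∈ f.support, a ≠ b ∧
      tropTerm v f ω a = tropTerm v f ω b ∧
      ∀ c ∈ f.support, tropTerm v f ω c ≤ tropTerm v f ω a }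

/-- A homogeneous ideal: one containing all homogeneous components of its elements. -/
def IsHomogeneousIdeal {K : Type*} [CommSemiring K] {n : ℕ}
    (I : Ideal (MvPolynomial (Fin n) K)) : Prop :=
  ∀ f ∈ I, ∀ d : ℕ, MvPolynomial.homogeneousComponent d f ∈ I

/-- `I` is saturated: `I = { g | ∃ N, ∀ j, g * x_j ^ N ∈ I }`. -/
def IsSaturatedIdeal {K : Type*} [CommSemiring K] {n : ℕ}
    (I : Ideal (MvPolynomial (Fin n) K)) : Prop :=
  ∀ g, g ∈ I ↔ ∃ N : ℕ, ∀ j : Fin n, g * (X j) ^ N ∈ I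

/-- `I_d`: the degree-`d` homogeneous component of the ideal `I`, as a `K`-subspace. -/
noncomputable def idealComponent {K : Type*} [CommRing K] {n : ℕ}
    (I : Ideal (MvPolynomial (Fin n) K)) (d : ℕ) : Submodule K (MvPolynomial (Fin n) K) :=
  (homogeneousSubmodule (Fin n) K d) ⊓ (Submodule.restrictScalars K I)

/-- The Hilbert function `h_I(d) = dim_K S_d - dim_K I_d`. -/
noncomputable def hilbertFn {K : Type*} [CommRing K] {n : ℕ}
    (I : Ideal (MvPolynomial (Fin n) K)) (d : ℕ) : ℕ :=
  Module.finrank K (homogeneousSubmodule (Fin n) K d) - Module.finrank K (idealComponent I d)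

/-- The value at `d` of the numerical polynomial `g(m_0, …, m_s; x)`. -/
def gVal (s : ℕ) (m : Fin (s + 1) → ℕ) (d : ℕ) : ℕ :=
  ∑ i : Fin (s + 1), (Nat.choose (d + i) (i + 1) - Nat.choose (d + i - m i) (i + 1))

/-- `I` has Hilbert polynomial `g(m_0, …, m_s; x)`: its Hilbert function agrees with
`g(m_0, …, m_s; ·)` for all large enough degrees. -/
def HasHilbertPoly {K : Type*} [CommRing K] {n : ℕ}
    (I : Ideal (MvPolynomial (Fin n) K)) (s : ℕ) (m : Fin (s + 1) → ℕ) : Prop :=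
  ∃ d₀ : ℕ, ∀ d ≥ d₀, hilbertFn I d = gVal s m d

/-!
Scaling a zero of a homogeneous ideal by `c ≠ 0` gives again a zero, and shifts its
tropicalization by `-v c` in every coordinate; hence `Trop(Z(I))` is stable under
translation by the value group `v(Kˣ)` along `(1, …, 1)`. Since `K` is algebraically
closed and `1 ∈ v(Kˣ)`, the value group contains `ℚ` and is dense in `ℝ`, and
`Trop(Z(I))` is closed, so it is stable under all real translations.
-/

namespace IsRealValuation

variable {K : Type*} [Field K] {v : K → ℝ}

lemma map_one (hv : IsRealValuation v) : v 1 = 0 := by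
  have h := hv.1 1 1 one_ne_zero one_ne_zero
  rw [mul_one] at h
  linarith

lemma map_pow (hv : IsRealValuation v) {c : K} (hc : c ≠ 0) (k : ℕ) :
    v (c ^ k) = k * v c := by
  induction k with
  | zero => simp [hv.map_one]
  | succ k ih =>
    rw [pow_succ, hv.1 _ _ (pow_ne_zero _ hc) hc, ih]
    push_cast
    ring

lemma map_inv (hv : IsRealValuation v) {c : K} (hc : c ≠ 0) : v c⁻¹ = -v c := by
  have h := hv.1 c c⁻¹ hc (inv_ne_zero hc)
  rw [mul_inv_cancel₀ hc, hv.map_one] at h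
  linarith

lemma map_zpow (hv : IsRealValuation v) {c : K} (hc : c ≠ 0) (m : ℤ) :
    v (c ^ m) = m * v c := by
  cases m with
  | ofNat k => simp [hv.map_pow hc]
  | negSucc k =>
    rw [zpow_negSucc, hv.map_inv (pow_ne_zero _ hc), hv.map_pow hc]
    push_cast
    ring

/-- A `q.den`-th root of an element of value `1` has value `1 / q.den`. -/
lemma ratCast_mem_image_compl_zero [IsAlgClosed K] (hv : IsRealValuation v)
    (hone : ∃ u : K, u ≠ 0 ∧ v u = 1) (q : ℚ) : (q : ℝ) ∈ v '' {0}ᶜ := by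
  obtain ⟨u, hu, hvu⟩ := hone
  obtain ⟨w, hw⟩ := IsAlgClosed.exists_pow_nat_eq u q.pos
  have hw0 : w ≠ 0 := by
    rintro rfl
    exact hu (by rw [← hw, zero_pow q.den_nz])
  have hden : (q.den : ℝ) * v w = 1 := by rw [← hv.map_pow hw0, hw, hvu]
  refine ⟨w ^ q.num, zpow_ne_zero _ hw0, ?_⟩
  rw [hv.map_zpow hw0, Rat.cast_def, eq_div_iff (by positivity)]
  linear_combination (q.num : ℝ) * hden

lemma dense_image_compl_zero [IsAlgClosed K] (hv : IsRealValuation v)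
    (hone : ∃ u : K, u ≠ 0 ∧ v u = 1) : Dense (v '' {0}ᶜ) :=
  Rat.denseRange_cast.mono (Set.range_subset_iff.mpr (hv.ratCast_mem_image_compl_zero hone))

end IsRealValuation

lemma MvPolynomial.IsHomogeneous.eval_smul {σ R : Type*} [CommSemiring R]
    {φ : MvPolynomial σ R} {d : ℕ} (hφ : φ.IsHomogeneous d) (c : R) (x : σ → R) :
    eval (c • x) φ = c ^ d * eval x φ := by
  simp only [eval_eq, Finset.mul_sum]
  refine Finset.sum_congr rfl fun a ha => ?_
  simp only [Pi.smul_apply, smul_eq_mul, mul_pow, Finset.prod_mul_distrib,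
    Finset.prod_pow_eq_pow_sum, ← hφ.degree_eq_sum_deg_support ha]
  ring

lemma IsHomogeneousIdeal.eval_smul_eq_zero {R : Type*} [CommSemiring R] {n : ℕ}
    {I : Ideal (MvPolynomial (Fin n) R)} (hI : IsHomogeneousIdeal I) {x : Fin n → R}
    (hx : ∀ f ∈ I, eval x f = 0) (c : R) : ∀ f ∈ I, eval (c • x) f = 0 := by
  intro f hf
  rw [← sum_homogeneousComponent f, map_sum]
  refine Finset.sum_eq_zero fun d _ => ?_
  rw [(homogeneousComponent_isHomogeneous d f).eval_smul, hx _ (hI f hf d), mul_zero]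

/-- Multiplying a zero of `I` by `c⁻¹` shifts its tropicalization by `v c`. -/
lemma IsHomogeneousIdeal.add_val_mem_tropOfZeroLocus {K : Type*} [Field K] {n : ℕ}
    {v : K → ℝ} (hv : IsRealValuation v) {I : Ideal (MvPolynomial (Fin n) K)}
    (hI : IsHomogeneousIdeal I) {c : K} (hc : c ≠ 0) {ω : Fin n → ℝ}
    (hω : ω ∈ tropOfZeroLocus v I) : (fun i => ω i + v c) ∈ tropOfZeroLocus v I := by
  refine map_mem_closure (f := fun ω i => ω i + v c) (by fun_prop) hω ?_
  rintro η ⟨x, hxI, hx0, hη⟩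
  refine ⟨c⁻¹ • x, hI.eval_smul_eq_zero hxI c⁻¹, fun i => mul_ne_zero (inv_ne_zero hc) (hx0 i),
    fun i => ?_⟩
  simp only [Pi.smul_apply, smul_eq_mul, hv.1 _ _ (inv_ne_zero hc) (hx0 i), hv.map_inv hc, hη]
  ring

/-- The tropicalization of the zero locus of a homogeneous ideal
`I ⊆ K[x_0,…,x_n]` is a tropical cone: it is stable under simultaneous translation of
all coordinates. -/
theorem trop_of_homogeneous_is_tropical_cone
    {K : Type*} [Field K] [IsAlgClosed K] (v : K → ℝ) (hv : IsRealValuation v)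
    (hone : ∃ u : K, u ≠ 0 ∧ v u = 1)
    {n : ℕ} (I : Ideal (MvPolynomial (Fin (n + 1)) K)) (hIhom : IsHomogeneousIdeal I) :
    ∀ ω ∈ tropOfZeroLocus v I, ∀ lam : ℝ,
      (fun i => ω i + lam) ∈ tropOfZeroLocus v I := by
  intro ω hω lam
  have hclosed : IsClosed {t : ℝ | (fun i => ω i + t) ∈ tropOfZeroLocus v I} :=
    isClosed_closure.preimage (by fun_prop)
  refine hclosed.closure_subset_iff.mpr ?_ (hv.dense_image_compl_zero hone lam)
  rintro _ ⟨c, hc, rfl⟩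
  exact hIhom.add_val_mem_tropOfZeroLocus hv hc hω
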